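/- arXiv:math/0509479 — 2 statements merged into one kernel-verified Lean document; each statement's English description precedes it below -/
import Mathlib

section
/- For H > 0 and t > 0, the half-height h_t(H) = ∫_t^{ρ_t(H)} H(ρ_t(H)² − x²)/√(x² − H²(ρ_t(H)² − x²)²) dx satisfies 0 < h_t(H) < 1/(2H). -/
open Set MeasureTheory intervalIntegral

/-!
Write `a(x) = H (ρ² - x²)` with `ρ = ρ_t(H)`, so that `H ρ² = H t² + t`. On `(t, ρ)` one has
`0 < a < t < x`, whence the integrand `a / √(x² - a²)` is strictly below
`x a / (t √(t² - a²))`, the derivative of `G(x) = √(t² - a(x)²) / (2 H t)`. Since `a(t) = t` and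
`a(ρ) = 0`, the comparison function integrates to `G ρ - G t = 1 / (2 H)`; being a nonnegative
derivative it is integrable in spite of its singularity at `x = t`.
-/

theorem integral_pos_and_lt_sub_of_lt_hasDerivAt {f g G : ℝ → ℝ} {a b : ℝ} (hab : a < b)
    (hG : ContinuousOn G (Icc a b)) (hderiv : ∀ x ∈ Ioo a b, HasDerivAt G (g x) x)
    (hf : Measurable f) (hf_pos : ∀ x ∈ Ioo a b, 0 < f x) (hfg : ∀ x ∈ Ioo a b, f x < g x) :
    0 < ∫ x in a..b, f x ∧ ∫ x in a..b, f x < G b - G a := by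
  have hg_int : IntervalIntegrable g volume a b :=
    (intervalIntegrable_iff_integrableOn_Ioc_of_le hab.le).2 <|
      integrableOn_deriv_of_nonneg hG hderiv fun x hx => (hf_pos x hx).le.trans (hfg x hx).le
  have hf_int : IntervalIntegrable f volume a b := by
    refine hg_int.mono_fun hf.aestronglyMeasurable ?_
    rw [uIoc_of_le hab.le]
    refine ae_restrict_of_ae_eq_of_ae_restrict Ioo_ae_eq_Ioc ?_
    filter_upwards [ae_restrict_mem measurableSet_Ioo] with x hx
    have hg_pos := (hf_pos x hx).trans (hfg x hx)
    rw [Real.norm_of_nonneg (hf_pos x hx).le, Real.norm_of_nonneg hg_pos.le]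
    exact (hfg x hx).le
  have hgap : 0 < ∫ x in a..b, (g x - f x) :=
    intervalIntegral_pos_of_pos_on (hg_int.sub hf_int) (fun x hx => sub_pos.2 (hfg x hx)) hab
  rw [integral_sub hg_int hf_int, integral_eq_sub_of_hasDerivAt_of_le hab.le hG hderiv hg_int]
    at hgap
  exact ⟨intervalIntegral_pos_of_pos_on hf_int hf_pos hab, by linarith⟩

theorem div_sqrt_sq_sub_sq_lt {a t x : ℝ} (ha : 0 < a) (hat : a < t) (htx : t < x) :
    a / √(x ^ 2 - a ^ 2) < x * a / (t * √(t ^ 2 - a ^ 2)) := by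
  have ht : 0 < t := ha.trans hat
  have hrad : 0 < t ^ 2 - a ^ 2 := by nlinarith
  have hsx : √(t ^ 2 - a ^ 2) < √(x ^ 2 - a ^ 2) := Real.sqrt_lt_sqrt hrad.le (by nlinarith)
  calc a / √(x ^ 2 - a ^ 2) = x * a / (x * √(x ^ 2 - a ^ 2)) := by
        rw [mul_div_mul_left _ _ (ht.trans htx).ne']
    _ < x * a / (t * √(t ^ 2 - a ^ 2)) :=
        div_lt_div_of_pos_left (mul_pos (ht.trans htx) ha) (mul_pos ht (Real.sqrt_pos.2 hrad))
          (mul_lt_mul'' htx hsx ht.le (Real.sqrt_nonneg _))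

section Nodoid

variable {H t ρ : ℝ}

theorem mul_sq_sub_sq_mem_Ioo (hH : 0 < H) (ht : 0 < t) (hρ : H * ρ ^ 2 = H * t ^ 2 + t)
    {x : ℝ} (hx : x ∈ Ioo t ρ) : H * (ρ ^ 2 - x ^ 2) ∈ Ioo 0 t := by
  obtain ⟨htx, hxρ⟩ := hx
  constructor
  · have hx2 : x ^ 2 < ρ ^ 2 := pow_lt_pow_left₀ hxρ (ht.trans htx).le two_ne_zero
    exact mul_pos hH (sub_pos.2 hx2)
  · have : t - H * (ρ ^ 2 - x ^ 2) = H * (x - t) * (x + t) := by linear_combination -hρ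
    nlinarith [mul_pos (mul_pos hH (sub_pos.2 htx)) (add_pos (ht.trans htx) ht)]

theorem hasDerivAt_sqrt_sq_sub_sq_div (hH : H ≠ 0) (ht : t ≠ 0) {x : ℝ}
    (hx : 0 < t ^ 2 - (H * (ρ ^ 2 - x ^ 2)) ^ 2) :
    HasDerivAt (fun y => √(t ^ 2 - (H * (ρ ^ 2 - y ^ 2)) ^ 2) / (2 * H * t))
      (x * (H * (ρ ^ 2 - x ^ 2)) / (t * √(t ^ 2 - (H * (ρ ^ 2 - x ^ 2)) ^ 2))) x := by
  have hrad : HasDerivAt (fun y => t ^ 2 - (H * (ρ ^ 2 - y ^ 2)) ^ 2)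
      (4 * H ^ 2 * x * (ρ ^ 2 - x ^ 2)) x := by
    refine ((((hasDerivAt_pow 2 x).const_sub (ρ ^ 2)).const_mul H).fun_pow 2).const_sub (t ^ 2)
      |>.congr_deriv ?_
    push_cast
    ring
  refine ((hrad.sqrt hx.ne').div_const (2 * H * t)).congr_deriv ?_
  have hs : √(t ^ 2 - (H * (ρ ^ 2 - x ^ 2)) ^ 2) ≠ 0 := Real.sqrt_ne_zero'.2 hx
  field_simp
  ring

end Nodoid

theorem half_height_bounds (H t : ℝ) (hH : 0 < H) (ht : 0 < t) :
    0 < (∫ x in t..(Real.sqrt ((H * t ^ 2 + t) / H)),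
        H * (Real.sqrt ((H * t ^ 2 + t) / H) ^ 2 - x ^ 2) /
          Real.sqrt (x ^ 2 - H ^ 2 * (Real.sqrt ((H * t ^ 2 + t) / H) ^ 2 - x ^ 2) ^ 2)) ∧
    (∫ x in t..(Real.sqrt ((H * t ^ 2 + t) / H)),
        H * (Real.sqrt ((H * t ^ 2 + t) / H) ^ 2 - x ^ 2) /
          Real.sqrt (x ^ 2 - H ^ 2 * (Real.sqrt ((H * t ^ 2 + t) / H) ^ 2 - x ^ 2) ^ 2))
      < 1 / (2 * H) := by
  set ρ := √((H * t ^ 2 + t) / H)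
  have hρ : H * ρ ^ 2 = H * t ^ 2 + t := by
    rw [Real.sq_sqrt (by positivity)]
    field_simp
  have htρ : t < ρ := Real.lt_sqrt_of_sq_lt <| (lt_div_iff₀ hH).2 (by linarith)
  set G := fun y => √(t ^ 2 - (H * (ρ ^ 2 - y ^ 2)) ^ 2) / (2 * H * t)
  have hGρ : G ρ = 1 / (2 * H) := by
    simp only [G, sub_self, mul_zero]
    rw [zero_pow two_ne_zero, sub_zero, Real.sqrt_sq ht.le]
    field_simp
  have hGt : G t = 0 := by
    have : H * (ρ ^ 2 - t ^ 2) = t := by linear_combination hρ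
    simp only [G, this, sub_self, Real.sqrt_zero, zero_div]
  simp_rw [← mul_pow]
  have hA := fun x (hx : x ∈ Ioo t ρ) => mul_sq_sub_sq_mem_Ioo hH ht hρ hx
  have hsq {a s : ℝ} (ha : 0 < a) (has : a < s) : 0 < s ^ 2 - a ^ 2 :=
    sub_pos.2 (pow_lt_pow_left₀ has ha.le two_ne_zero)
  have key := integral_pos_and_lt_sub_of_lt_hasDerivAt htρ (G := G)
    (f := fun x => H * (ρ ^ 2 - x ^ 2) / √(x ^ 2 - (H * (ρ ^ 2 - x ^ 2)) ^ 2)) (by fun_prop)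
    (fun x hx => hasDerivAt_sqrt_sq_sub_sq_div hH.ne' ht.ne' (hsq (hA x hx).1 (hA x hx).2))
    (by fun_prop)
    (fun x hx => div_pos (hA x hx).1 (Real.sqrt_pos.2 (hsq (hA x hx).1 ((hA x hx).2.trans hx.1))))
    (fun x hx => div_sqrt_sq_sub_sq_lt (hA x hx).1 (hA x hx).2 hx.1)
  rwa [hGρ, hGt, sub_zero] at key
end

section
/- Let H > 0 and suppose u, v are two solutions of div(∇u/√(1+|∇u|²)) = 2H on Ω = ℝ × (−l, l), continuous on the closure, with the same boundary values, and such that v − u is bounded on Ω. Then u = v. -/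
/-- Partial derivative in the first coordinate direction. -/
noncomputable def pdx (f : ℝ × ℝ → ℝ) (p : ℝ × ℝ) : ℝ := fderiv ℝ f p (1, 0)

/-- Partial derivative in the second coordinate direction. -/
noncomputable def pdy (f : ℝ × ℝ → ℝ) (p : ℝ × ℝ) : ℝ := fderiv ℝ f p (0, 1)

/-- The CMC divergence operator `div(∇u/√(1+|∇u|²))` at a point. -/
noncomputable def cmcOp (u : ℝ × ℝ → ℝ) (p : ℝ × ℝ) : ℝ :=
  pdx (fun q => pdx u q / Real.sqrt (1 + (pdx u q) ^ 2 + (pdy u q) ^ 2)) p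
  + pdy (fun q => pdy u q / Real.sqrt (1 + (pdx u q) ^ 2 + (pdy u q) ^ 2)) p

/-!
Write `T u = ∇u / √(1 + |∇u|²)`, so that the equation reads `div (T u) = 2H`, and let
`w = v - u`, `X = T v - T u`. Then `div X = 0`, hence `div (w X) = ⟨∇w, X⟩`, and the
monotonicity of `p ↦ p / √(1 + |p|²)` gives `|X|² ≤ ⟨∇w, X⟩`. Integrate `⟨∇w, X⟩` over
the rectangles `[-t, t] × [-b, b]`. Choosing `b` close to `l` makes the horizontal boundary
terms small because `w` vanishes on the boundary of the strip, while the vertical ones are at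
most `sup |w|` times the `L¹`-norm of `X₁` on the vertical sides. If `X ≠ 0` somewhere, the
rectangle energy is bounded below by some `δ > 0`, hence that `L¹`-norm is bounded below, hence
by Cauchy–Schwarz the energy grows linearly in `t`, contradicting its upper bound
`δ / 2 + 8 l sup |w|`.
So `X = 0`, then `∇u = ∇v`, and `v - u` is a constant which vanishes on the boundary.
-/

open Real Set MeasureTheory Filter Topology
open scoped Interval

section PartialDerivatives

variable {f g : ℝ × ℝ → ℝ} {p : ℝ × ℝ}

lemma pdx_sub (hf : DifferentiableAt ℝ f p) (hg : DifferentiableAt ℝ g p) :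
    pdx (fun q => f q - g q) p = pdx f p - pdx g p := by
  simp [pdx, fderiv_fun_sub hf hg]

lemma pdy_sub (hf : DifferentiableAt ℝ f p) (hg : DifferentiableAt ℝ g p) :
    pdy (fun q => f q - g q) p = pdy f p - pdy g p := by
  simp [pdy, fderiv_fun_sub hf hg]

lemma pdx_mul (hf : DifferentiableAt ℝ f p) (hg : DifferentiableAt ℝ g p) :
    pdx (fun q => f q * g q) p = f p * pdx g p + g p * pdx f p := by
  simp [pdx, fderiv_fun_mul hf hg]

lemma pdy_mul (hf : DifferentiableAt ℝ f p) (hg : DifferentiableAt ℝ g p) :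
    pdy (fun q => f q * g q) p = f p * pdy g p + g p * pdy f p := by
  simp [pdy, fderiv_fun_mul hf hg]

lemma fderiv_eq_zero_of_pdx_of_pdy (hx : pdx f p = 0) (hy : pdy f p = 0) :
    fderiv ℝ f p = 0 := by
  ext <;> simpa

variable {s : Set (ℝ × ℝ)} {m n : WithTop ℕ∞}

lemma contDiffOn_pdx (hs : IsOpen s) (hf : ContDiffOn ℝ n f s) (hmn : m + 1 ≤ n) :
    ContDiffOn ℝ m (pdx f) s :=
  (hf.fderiv_of_isOpen hs hmn).clm_apply contDiffOn_const

lemma contDiffOn_pdy (hs : IsOpen s) (hf : ContDiffOn ℝ n f s) (hmn : m + 1 ≤ n) :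
    ContDiffOn ℝ m (pdy f) s :=
  (hf.fderiv_of_isOpen hs hmn).clm_apply contDiffOn_const

lemma integral_integral_pdx_add_pdy (hs : IsOpen s) (hf : ContDiffOn ℝ 1 f s)
    (hg : ContDiffOn ℝ 1 g s) {a₁ a₂ b₁ b₂ : ℝ} (hR : [[a₁, b₁]] ×ˢ [[a₂, b₂]] ⊆ s) :
    ∫ x in a₁..b₁, ∫ y in a₂..b₂, pdx f (x, y) + pdy g (x, y) =
      (((∫ x in a₁..b₁, g (x, b₂)) - ∫ x in a₁..b₁, g (x, a₂)) + ∫ y in a₂..b₂, f (b₁, y)) -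
        ∫ y in a₂..b₂, f (a₁, y) := by
  have hderiv : ∀ {h : ℝ × ℝ → ℝ}, ContDiffOn ℝ 1 h s →
      ∀ p ∈ Ioo (min a₁ b₁) (max a₁ b₁) ×ˢ Ioo (min a₂ b₂) (max a₂ b₂),
        HasFDerivAt h (fderiv ℝ h p) p := fun hh p hp =>
    have hps : p ∈ s := hR (prod_mono Ioo_subset_Icc_self Ioo_subset_Icc_self hp)
    ((hh.contDiffAt (hs.mem_nhds hps)).differentiableAt one_ne_zero).hasFDerivAt
  have hdiv : ContinuousOn (fun p => pdx f p + pdy g p) s :=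
    (contDiffOn_pdx hs hf (zero_add 1).le).continuousOn.add
      (contDiffOn_pdy hs hg (zero_add 1).le).continuousOn
  exact integral2_divergence_prod_of_hasFDerivAt f g (fderiv ℝ f) (fderiv ℝ g) a₁ a₂ b₁ b₂
    (hf.continuousOn.mono hR) (hg.continuousOn.mono hR) (hderiv hf) (hderiv hg)
    ((hdiv.mono hR).integrableOn_compact (isCompact_uIcc.prod isCompact_uIcc))

end PartialDerivatives

section IntervalIntegrals

lemma continuous_intervalIntegral_of_continuousOn {f : ℝ × ℝ → ℝ} {a b : ℝ}
    (hf : ContinuousOn f (univ ×ˢ [[a, b]])) : Continuous fun x => ∫ y in a..b, f (x, y) := by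
  -- Clamping the second variable to `[[a, b]]` gives a continuous function on the whole plane
  -- with the same slice integrals.
  set c : ℝ → ℝ := fun y => projIcc (min a b) (max a b) min_le_max y
  have hc : Continuous c := continuous_subtype_val.comp continuous_projIcc
  have hfc : Continuous fun p : ℝ × ℝ => f (p.1, c p.2) :=
    hf.comp_continuous (continuous_fst.prodMk (hc.comp continuous_snd))
      fun p => ⟨mem_univ _, Subtype.prop _⟩
  have heq : ∀ x, ∫ y in a..b, f (x, y) = ∫ y in a..b, f (x, c y) := fun x =>
    intervalIntegral.integral_congr fun y hy => by simp only [c, projIcc_of_mem _ hy]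
  simp_rw [heq]
  exact intervalIntegral.continuous_parametric_intervalIntegral_of_continuous'
    (f := fun x y => f (x, c y)) hfc a b

lemma intervalIntegral_pos_of_continuousOn {f : ℝ → ℝ} {a b c : ℝ}
    (hf : ContinuousOn f (Icc a b)) (hf0 : ∀ x ∈ Icc a b, 0 ≤ f x) (hc : c ∈ Ioo a b)
    (hfc : 0 < f c) : 0 < ∫ x in a..b, f x := by
  have hab : a ≤ b := (hc.1.trans hc.2).le
  have hf0' : 0 ≤ᵐ[volume.restrict (Ι a b)] f := by
    rw [uIoc_of_le hab]
    exact (ae_restrict_mem measurableSet_Ioc).mono fun x hx => hf0 x (Ioc_subset_Icc_self hx)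
  rw [intervalIntegral.integral_pos_iff_support_of_nonneg_ae' hf0'
    (hf.intervalIntegrable_of_Icc hab)]
  have hU : IsOpen (Ioo a b ∩ f ⁻¹' Ioi 0) :=
    (hf.mono Ioo_subset_Icc_self).isOpen_inter_preimage isOpen_Ioo isOpen_Ioi
  refine ⟨hc.1.trans hc.2, (hU.measure_pos volume ⟨c, hc, hfc⟩).trans_le (measure_mono ?_)⟩
  exact fun x hx => ⟨hx.2.ne', Ioo_subset_Ioc_self hx.1⟩

lemma sq_intervalIntegral_le {f : ℝ → ℝ} {a b : ℝ} (hab : a ≤ b) (hf : ContinuousOn f [[a, b]]) :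
    (∫ x in a..b, f x) ^ 2 ≤ (b - a) * ∫ x in a..b, f x ^ 2 := by
  have h1 : IntervalIntegrable f volume a b := hf.intervalIntegrable
  have h2 : IntervalIntegrable (fun x => f x ^ 2) volume a b := (hf.pow 2).intervalIntegrable
  generalize hI : ∫ x in a..b, f x = I
  -- Expand `0 ≤ ∫ ((b - a) f - ∫ f)²`.
  have hexp : ∫ x in a..b, ((b - a) * f x - I) ^ 2 =
      (b - a) * ((b - a) * (∫ x in a..b, f x ^ 2) - I ^ 2) := by
    have : (fun x => ((b - a) * f x - I) ^ 2) =
        fun x => ((b - a) ^ 2 * f x ^ 2 - 2 * (b - a) * I * f x) + I ^ 2 := by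
      ext x; ring
    rw [this, intervalIntegral.integral_add ((h2.const_mul _).sub (h1.const_mul _))
      intervalIntegrable_const, intervalIntegral.integral_sub (h2.const_mul _) (h1.const_mul _),
      intervalIntegral.integral_const_mul, intervalIntegral.integral_const_mul,
      intervalIntegral.integral_const, smul_eq_mul, hI]
    ring
  have hnn : 0 ≤ (b - a) * ((b - a) * (∫ x in a..b, f x ^ 2) - I ^ 2) :=
    hexp ▸ intervalIntegral.integral_nonneg hab fun x _ => sq_nonneg _
  rcases hab.lt_or_eq with hlt | rfl
  · nlinarith [(mul_nonneg_iff_of_pos_left (sub_pos.2 hlt)).1 hnn]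
  · simp [← hI]

lemma intervalIntegral_sub_le_of_abs_add_abs_le {f g h : ℝ → ℝ} {a b : ℝ} (hab : a ≤ b)
    (hf : IntervalIntegrable f volume a b) (hg : IntervalIntegrable g volume a b)
    (hh : IntervalIntegrable h volume a b) (hfgh : ∀ x ∈ Icc a b, |f x| + |g x| ≤ h x) :
    (∫ x in a..b, f x) - ∫ x in a..b, g x ≤ ∫ x in a..b, h x := by
  rw [← intervalIntegral.integral_sub hf hg]
  refine intervalIntegral.integral_mono_on hab (hf.sub hg) hh fun x hx => ?_
  linarith [le_abs_self (f x), neg_abs_le (g x), hfgh x hx]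

lemma integral_neg_sub_integral_neg {φ : ℝ → ℝ} (hφ : Continuous φ) (a A : ℝ) :
    (∫ x in -A..A, φ x) - ∫ x in -a..a, φ x = ∫ t in a..A, (φ t + φ (-t)) := by
  have hi : ∀ c d : ℝ, IntervalIntegrable φ volume c d := fun _ _ => hφ.intervalIntegrable _ _
  have hi' : IntervalIntegrable (fun t => φ (-t)) volume a A :=
    (hφ.comp continuous_neg).intervalIntegrable a A
  rw [intervalIntegral.integral_add (hi a A) hi', intervalIntegral.integral_comp_neg,
    ← intervalIntegral.integral_add_adjacent_intervals (hi (-A) (-a)) (hi (-a) A),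
    ← intervalIntegral.integral_add_adjacent_intervals (hi (-a) a) (hi a A)]
  ring

end IntervalIntegrals

lemma tendsto_nhdsWithin_zero_of_eq_zero_on_frontier {X : Type*} [TopologicalSpace X]
    {S : Set X} {w : X → ℝ} (hw : ContinuousOn w (closure S))
    (hw0 : ∀ p ∈ frontier S, w p = 0) {p : X} (hp : p ∈ frontier S) :
    Tendsto w (𝓝[S] p) (𝓝 0) :=
  hw0 p hp ▸ ((hw p (frontier_subset_closure hp)).mono subset_closure).tendsto

lemma IsOpen.eqOn_zero_of_fderiv_eq_zero {E : Type*} [NormedAddCommGroup E] [NormedSpace ℝ E]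
    {S : Set E} {w : E → ℝ} (hS : IsOpen S) (hS' : IsPreconnected S)
    (hfr : (frontier S).Nonempty) (hw : DifferentiableOn ℝ w S) (hw' : EqOn (fderiv ℝ w) 0 S)
    (hwc : ContinuousOn w (closure S)) (hw0 : ∀ p ∈ frontier S, w p = 0) : EqOn w 0 S := by
  obtain ⟨c, hc⟩ := hS.exists_is_const_of_fderiv_eq_zero hS' hw hw'
  obtain ⟨q, hq⟩ := hfr
  have : (𝓝[S] q).NeBot := mem_closure_iff_nhdsWithin_neBot.1 (frontier_subset_closure hq)
  have hlim : Tendsto w (𝓝[S] q) (𝓝 c) :=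
    tendsto_const_nhds.congr' (eventually_nhdsWithin_of_forall fun x hx => (hc x hx).symm)
  have hc0 : c = 0 := tendsto_nhds_unique hlim
    (tendsto_nhdsWithin_zero_of_eq_zero_on_frontier hwc hw0 hq)
  exact fun x hx => (hc x hx).trans hc0

noncomputable def W (x y : ℝ) : ℝ := √(1 + x ^ 2 + y ^ 2)

lemma W_sq (x y : ℝ) : W x y ^ 2 = 1 + x ^ 2 + y ^ 2 := sq_sqrt (by positivity)

lemma one_le_W (x y : ℝ) : 1 ≤ W x y := by
  rw [W, one_le_sqrt]; nlinarith [sq_nonneg x, sq_nonneg y]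

lemma W_pos (x y : ℝ) : 0 < W x y := one_pos.trans_le (one_le_W x y)

lemma W_comm (x y : ℝ) : W x y = W y x := by rw [W, W, add_right_comm]

lemma abs_div_W_le_one (x y : ℝ) : |x / W x y| ≤ 1 := by
  rw [abs_div, abs_of_pos (W_pos x y), div_le_one (W_pos x y), ← sqrt_sq_eq_abs, W]
  exact sqrt_le_sqrt (by nlinarith [sq_nonneg y])

-- Cauchy–Schwarz for `(1, x₁, y₁)` and `(1, x₂, y₂)` in `ℝ³`.
lemma one_add_inner_le_W_mul_W (x₁ y₁ x₂ y₂ : ℝ) :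
    1 + x₁ * x₂ + y₁ * y₂ ≤ W x₁ y₁ * W x₂ y₂ := by
  rw [W, W, ← sqrt_mul (by positivity)]
  refine (le_abs_self _).trans (abs_le_sqrt ?_)
  nlinarith [sq_nonneg (x₁ - x₂), sq_nonneg (y₁ - y₂), sq_nonneg (x₁ * y₂ - x₂ * y₁)]

lemma sq_sub_div_W_add_sq_sub_div_W_le (x₁ y₁ x₂ y₂ : ℝ) :
    (x₁ / W x₁ y₁ - x₂ / W x₂ y₂) ^ 2 + (y₁ / W x₁ y₁ - y₂ / W x₂ y₂) ^ 2 ≤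
      (x₁ - x₂) * (x₁ / W x₁ y₁ - x₂ / W x₂ y₂) + (y₁ - y₂) * (y₁ / W x₁ y₁ - y₂ / W x₂ y₂) := by
  have ha := one_le_W x₁ y₁
  have hb := one_le_W x₂ y₂
  have hab := one_add_inner_le_W_mul_W x₁ y₁ x₂ y₂
  set a := W x₁ y₁
  set b := W x₂ y₂
  have key : a * b * ((x₁ - x₂) * (x₁ * b - x₂ * a) + (y₁ - y₂) * (y₁ * b - y₂ * a))
      - ((x₁ * b - x₂ * a) ^ 2 + (y₁ * b - y₂ * a) ^ 2)
      = a * b * (a * b - 1 - (x₁ * x₂ + y₁ * y₂)) * (a + b - 2) + (a - b) ^ 2 := by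
    linear_combination (-(b ^ 2 * (a - 1))) * W_sq x₁ y₁ + (-(a ^ 2 * (b - 1))) * W_sq x₂ y₂
  have hnn : 0 ≤ a * b * (a * b - 1 - (x₁ * x₂ + y₁ * y₂)) * (a + b - 2) + (a - b) ^ 2 := by
    have h₁ : 0 ≤ a * b := by positivity
    have h₂ : 0 ≤ a * b - 1 - (x₁ * x₂ + y₁ * y₂) := by linarith
    have h₃ : 0 ≤ a + b - 2 := by linarith
    positivity
  have ha0 : a ≠ 0 := by positivity
  have hb0 : b ≠ 0 := by positivity
  rw [← sub_nonneg]
  have : (x₁ - x₂) * (x₁ / a - x₂ / b) + (y₁ - y₂) * (y₁ / a - y₂ / b) -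
      ((x₁ / a - x₂ / b) ^ 2 + (y₁ / a - y₂ / b) ^ 2) =
      (a * b * (a * b - 1 - (x₁ * x₂ + y₁ * y₂)) * (a + b - 2) + (a - b) ^ 2) / (a * b) ^ 2 := by
    rw [← key]; field_simp
  rw [this]; positivity

lemma inv_W_sq (x y : ℝ) : (W x y)⁻¹ ^ 2 = 1 - (x / W x y) ^ 2 - (y / W x y) ^ 2 := by
  have h := W_sq x y
  have : W x y ≠ 0 := (W_pos x y).ne'
  field_simp
  linarith

lemma eq_of_div_W_eq {x₁ y₁ x₂ y₂ : ℝ} (hx : x₁ / W x₁ y₁ = x₂ / W x₂ y₂)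
    (hy : y₁ / W x₁ y₁ = y₂ / W x₂ y₂) : x₁ = x₂ ∧ y₁ = y₂ := by
  have hW : W x₁ y₁ = W x₂ y₂ := by
    have h : (W x₁ y₁)⁻¹ ^ 2 = (W x₂ y₂)⁻¹ ^ 2 := by rw [inv_W_sq, inv_W_sq, hx, hy]
    have := (pow_left_inj₀ (inv_nonneg.2 (W_pos x₁ y₁).le) (inv_nonneg.2 (W_pos x₂ y₂).le)
      two_ne_zero).1 h
    exact inv_injective this
  rw [hW] at hx hy
  exact ⟨(div_left_inj' (W_pos x₂ y₂).ne').1 hx, (div_left_inj' (W_pos x₂ y₂).ne').1 hy⟩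

noncomputable def tx (u : ℝ × ℝ → ℝ) (q : ℝ × ℝ) : ℝ := pdx u q / W (pdx u q) (pdy u q)

noncomputable def ty (u : ℝ × ℝ → ℝ) (q : ℝ × ℝ) : ℝ := pdy u q / W (pdx u q) (pdy u q)

lemma cmcOp_eq (u : ℝ × ℝ → ℝ) (p : ℝ × ℝ) : cmcOp u p = pdx (tx u) p + pdy (ty u) p := rfl

noncomputable def gradPairing (u v : ℝ × ℝ → ℝ) (q : ℝ × ℝ) : ℝ :=
  (pdx v q - pdx u q) * (tx v q - tx u q) + (pdy v q - pdy u q) * (ty v q - ty u q)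

noncomputable def fluxX (u v : ℝ × ℝ → ℝ) (q : ℝ × ℝ) : ℝ := (v q - u q) * (tx v q - tx u q)

noncomputable def fluxY (u v : ℝ × ℝ → ℝ) (q : ℝ × ℝ) : ℝ := (v q - u q) * (ty v q - ty u q)

section Pointwise

variable (u v : ℝ × ℝ → ℝ) (q : ℝ × ℝ)

lemma sq_add_sq_le_gradPairing :
    (tx v q - tx u q) ^ 2 + (ty v q - ty u q) ^ 2 ≤ gradPairing u v q :=
  sq_sub_div_W_add_sq_sub_div_W_le _ _ _ _

lemma gradPairing_nonneg : 0 ≤ gradPairing u v q :=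
  (by positivity : (0 : ℝ) ≤ _).trans (sq_add_sq_le_gradPairing u v q)

lemma sq_tx_sub_le_gradPairing : (tx v q - tx u q) ^ 2 ≤ gradPairing u v q :=
  (le_add_of_nonneg_right (sq_nonneg _)).trans (sq_add_sq_le_gradPairing u v q)

lemma abs_tx_sub_le_two : |tx v q - tx u q| ≤ 2 := by
  refine (abs_sub _ _).trans ?_
  have hv := abs_div_W_le_one (pdx v q) (pdy v q)
  have hu := abs_div_W_le_one (pdx u q) (pdy u q)
  unfold tx
  linarith

lemma abs_ty_sub_le_two : |ty v q - ty u q| ≤ 2 := by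
  refine (abs_sub _ _).trans ?_
  have hv := abs_div_W_le_one (pdy v q) (pdx v q)
  have hu := abs_div_W_le_one (pdy u q) (pdx u q)
  rw [W_comm] at hv hu
  unfold ty
  linarith

lemma abs_fluxX_le {M : ℝ} (hM : |v q - u q| ≤ M) : |fluxX u v q| ≤ M * |tx v q - tx u q| := by
  rw [fluxX, abs_mul]
  exact mul_le_mul_of_nonneg_right hM (abs_nonneg _)

lemma abs_fluxY_le : |fluxY u v q| ≤ 2 * |v q - u q| := by
  rw [fluxY, abs_mul, mul_comm]
  exact mul_le_mul_of_nonneg_right (abs_ty_sub_le_two u v q) (abs_nonneg _)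

lemma pdx_eq_and_pdy_eq_of_gradPairing_eq_zero (h : gradPairing u v q = 0) :
    pdx u q = pdx v q ∧ pdy u q = pdy v q := by
  have hle := h ▸ sq_add_sq_le_gradPairing u v q
  have h₁ := sq_nonneg (tx v q - tx u q)
  have h₂ := sq_nonneg (ty v q - ty u q)
  have hx : tx v q - tx u q = 0 := pow_eq_zero_iff two_ne_zero |>.1 (by linarith)
  have hy : ty v q - ty u q = 0 := pow_eq_zero_iff two_ne_zero |>.1 (by linarith)
  exact eq_of_div_W_eq (sub_eq_zero.1 hx).symm (sub_eq_zero.1 hy).symm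

end Pointwise

section Regularity

variable {u v : ℝ × ℝ → ℝ} {s : Set (ℝ × ℝ)} {m n : WithTop ℕ∞}

lemma contDiffOn_W (hs : IsOpen s) (hu : ContDiffOn ℝ n u s) (hmn : m + 1 ≤ n) :
    ContDiffOn ℝ m (fun q => W (pdx u q) (pdy u q)) s :=
  ((contDiffOn_const.add ((contDiffOn_pdx hs hu hmn).pow 2)).add
    ((contDiffOn_pdy hs hu hmn).pow 2)).sqrt fun _ _ => by positivity

lemma contDiffOn_tx (hs : IsOpen s) (hu : ContDiffOn ℝ n u s) (hmn : m + 1 ≤ n) :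
    ContDiffOn ℝ m (tx u) s :=
  (contDiffOn_pdx hs hu hmn).div (contDiffOn_W hs hu hmn) fun _ _ => (W_pos _ _).ne'

lemma contDiffOn_ty (hs : IsOpen s) (hu : ContDiffOn ℝ n u s) (hmn : m + 1 ≤ n) :
    ContDiffOn ℝ m (ty u) s :=
  (contDiffOn_pdy hs hu hmn).div (contDiffOn_W hs hu hmn) fun _ _ => (W_pos _ _).ne'

lemma continuousOn_gradPairing (hs : IsOpen s) (hu : ContDiffOn ℝ 1 u s)
    (hv : ContDiffOn ℝ 1 v s) : ContinuousOn (gradPairing u v) s := by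
  have h01 : (0 : WithTop ℕ∞) + 1 ≤ 1 := (zero_add 1).le
  exact (((contDiffOn_pdx hs hv h01).sub (contDiffOn_pdx hs hu h01)).mul
    ((contDiffOn_tx hs hv h01).sub (contDiffOn_tx hs hu h01))).continuousOn.add
    (((contDiffOn_pdy hs hv h01).sub (contDiffOn_pdy hs hu h01)).mul
    ((contDiffOn_ty hs hv h01).sub (contDiffOn_ty hs hu h01))).continuousOn

lemma contDiffOn_fluxX (hs : IsOpen s) (hu : ContDiffOn ℝ 2 u s) (hv : ContDiffOn ℝ 2 v s) :
    ContDiffOn ℝ 1 (fluxX u v) s :=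
  ((hv.sub hu).of_le one_le_two).mul ((contDiffOn_tx hs hv le_rfl).sub (contDiffOn_tx hs hu le_rfl))

lemma contDiffOn_fluxY (hs : IsOpen s) (hu : ContDiffOn ℝ 2 u s) (hv : ContDiffOn ℝ 2 v s) :
    ContDiffOn ℝ 1 (fluxY u v) s :=
  ((hv.sub hu).of_le one_le_two).mul ((contDiffOn_ty hs hv le_rfl).sub (contDiffOn_ty hs hu le_rfl))

lemma pdx_fluxX_add_pdy_fluxY (hs : IsOpen s) (hu : ContDiffOn ℝ 2 u s)
    (hv : ContDiffOn ℝ 2 v s) {p : ℝ × ℝ} (hp : p ∈ s) (hcmc : cmcOp u p = cmcOp v p) :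
    pdx (fluxX u v) p + pdy (fluxY u v) p = gradPairing u v p := by
  have hdiff : ∀ {f : ℝ × ℝ → ℝ}, ContDiffOn ℝ 1 f s → DifferentiableAt ℝ f p :=
    fun hf => (hf.contDiffAt (hs.mem_nhds hp)).differentiableAt one_ne_zero
  have hu' := hdiff (hu.of_le one_le_two)
  have hv' := hdiff (hv.of_le one_le_two)
  have htu := hdiff (contDiffOn_tx hs hu le_rfl)
  have htv := hdiff (contDiffOn_tx hs hv le_rfl)
  have hsu := hdiff (contDiffOn_ty hs hu le_rfl)
  have hsv := hdiff (contDiffOn_ty hs hv le_rfl)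
  rw [cmcOp_eq, cmcOp_eq] at hcmc
  change pdx (fun q => (v q - u q) * (tx v q - tx u q)) p +
    pdy (fun q => (v q - u q) * (ty v q - ty u q)) p = gradPairing u v p
  rw [pdx_mul (hv'.fun_sub hu') (htv.fun_sub htu), pdy_mul (hv'.fun_sub hu') (hsv.fun_sub hsu),
    pdx_sub hv' hu', pdy_sub hv' hu', pdx_sub htv htu, pdy_sub hsv hsu, gradPairing]
  linear_combination (u p - v p) * hcmc

end Regularity
def strip (l : ℝ) : Set (ℝ × ℝ) := univ ×ˢ Ioo (-l) l

section Strip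

variable {l b : ℝ}

lemma isOpen_strip (l : ℝ) : IsOpen (strip l) := isOpen_univ.prod isOpen_Ioo

lemma isPreconnected_strip (l : ℝ) : IsPreconnected (strip l) :=
  (convex_univ.prod (convex_Ioo _ _)).isPreconnected

lemma frontier_strip (hl : 0 < l) : frontier (strip l) = univ ×ˢ {-l, l} := by
  rw [strip, frontier_prod_eq, frontier_univ, closure_univ, frontier_Ioo (by linarith)]
  simp

lemma univ_prod_uIcc_subset_strip (hb : 0 ≤ b) (hbl : b < l) :
    univ ×ˢ [[-b, b]] ⊆ strip l := by
  rw [uIcc_of_le (by linarith)]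
  exact prod_mono subset_rfl (Icc_subset_Ioo (by linarith) hbl)

lemma uIcc_prod_uIcc_subset_strip (hb : 0 ≤ b) (hbl : b < l) (t : ℝ) :
    [[-t, t]] ×ˢ [[-b, b]] ⊆ strip l :=
  (prod_mono (subset_univ _) subset_rfl).trans (univ_prod_uIcc_subset_strip hb hbl)

variable {F : ℝ × ℝ → ℝ}

lemma continuous_horizontal_slice (hF : ContinuousOn F (strip l)) {y : ℝ}
    (hy : y ∈ Ioo (-l) l) : Continuous fun x => F (x, y) :=
  hF.comp_continuous (continuous_id.prodMk continuous_const) fun _ => ⟨mem_univ _, hy⟩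

lemma continuousOn_vertical_slice (hF : ContinuousOn F (strip l)) (hb : 0 ≤ b) (hbl : b < l)
    (t : ℝ) : ContinuousOn (fun y => F (t, y)) [[-b, b]] :=
  hF.comp (continuous_const.prodMk continuous_id).continuousOn
    fun _ hy => univ_prod_uIcc_subset_strip hb hbl ⟨mem_univ t, hy⟩

lemma tendsto_abs_add_abs_nhdsLT (hl : 0 < l) (hF : ContinuousOn F (closure (strip l)))
    (hF0 : ∀ p ∈ frontier (strip l), F p = 0) (x : ℝ) :
    Tendsto (fun b => |F (x, b)| + |F (x, -b)|) (𝓝[<] l) (𝓝 0) := by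
  have hin : ∀ᶠ b in 𝓝[<] l, b ∈ Ioo (-l) l := Ioo_mem_nhdsLT (by linarith)
  have hfr : ∀ y ∈ ({-l, l} : Set ℝ), Tendsto (fun b => F (x, b)) (𝓝[Ioo (-l) l] y) (𝓝 0) :=
    fun y hy => (tendsto_nhdsWithin_zero_of_eq_zero_on_frontier hF hF0 (p := (x, y))
      (by rw [frontier_strip hl]; exact ⟨mem_univ x, hy⟩)).comp
      (tendsto_nhdsWithin_iff.2 ⟨(continuous_const.prodMk continuous_id).continuousAt.tendsto
        |>.mono_left nhdsWithin_le_nhds,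
        eventually_nhdsWithin_of_forall fun b hb => ⟨mem_univ x, hb⟩⟩)
  have htop : Tendsto (fun b => b) (𝓝[<] l) (𝓝[Ioo (-l) l] l) :=
    tendsto_nhdsWithin_iff.2 ⟨nhdsWithin_le_nhds, hin⟩
  have hbot : Tendsto (fun b => -b) (𝓝[<] l) (𝓝[Ioo (-l) l] (-l)) :=
    tendsto_nhdsWithin_iff.2 ⟨(continuous_neg.tendsto l).mono_left nhdsWithin_le_nhds,
      hin.mono fun b hb => ⟨by linarith [hb.2], by linarith [hb.1]⟩⟩
  simpa using ((hfr l (by simp)).comp htop).abs.add ((hfr (-l) (by simp)).comp hbot).abs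

lemma exists_integral_abs_lt {M : ℝ} (hl : 0 < l) (hF : ContinuousOn F (closure (strip l)))
    (hF0 : ∀ p ∈ frontier (strip l), F p = 0) (hM : ∀ p ∈ strip l, |F p| ≤ M) (A : ℝ)
    {ε : ℝ} (hε : 0 < ε) {b₀ : ℝ} (hb₀ : b₀ < l) :
    ∃ b ∈ Ioo b₀ l, ∫ x in -A..A, (|F (x, b)| + |F (x, -b)|) < ε := by
  have hin : ∀ᶠ b in 𝓝[<] l, b ∈ Ioo (-l) l := Ioo_mem_nhdsLT (by linarith)
  have hF' : ContinuousOn F (strip l) := hF.mono subset_closure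
  have hint : Tendsto (fun b => ∫ x in -A..A, (|F (x, b)| + |F (x, -b)|)) (𝓝[<] l)
      (𝓝 (∫ _ in -A..A, (0 : ℝ))) := by
    refine intervalIntegral.tendsto_integral_filter_of_dominated_convergence (fun _ => 2 * M)
      (hin.mono fun b hb => ?_) (hin.mono fun b hb => ae_of_all _ fun x _ => ?_)
      intervalIntegrable_const (ae_of_all _ fun x _ => tendsto_abs_add_abs_nhdsLT hl hF hF0 x)
    · exact ((continuous_horizontal_slice hF' hb).abs.add (continuous_horizontal_slice hF'
        ⟨by linarith [hb.2], by linarith [hb.1]⟩).abs).aestronglyMeasurable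
    · have h1 := hM _ (⟨mem_univ x, hb⟩ : (x, b) ∈ strip l)
      have h2 := hM _ (⟨mem_univ x, by linarith [hb.2], by linarith [hb.1]⟩ : (x, -b) ∈ strip l)
      rw [Real.norm_of_nonneg (by positivity)]
      linarith
  rw [intervalIntegral.integral_zero] at hint
  obtain ⟨b, hbε, hb⟩ := ((hint.eventually (gt_mem_nhds hε)).and (Ioo_mem_nhdsLT hb₀)).exists
  exact ⟨b, hb, hbε⟩

end Strip

noncomputable def sliceEnergy (u v : ℝ × ℝ → ℝ) (b x : ℝ) : ℝ :=
  ∫ y in -b..b, gradPairing u v (x, y)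

noncomputable def energy (u v : ℝ × ℝ → ℝ) (b t : ℝ) : ℝ := ∫ x in -t..t, sliceEnergy u v b x

noncomputable def sideFlux (u v : ℝ × ℝ → ℝ) (b t : ℝ) : ℝ :=
  ∫ y in -b..b, (|tx v (t, y) - tx u (t, y)| + |tx v (-t, y) - tx u (-t, y)|)

section BoundedDifference

variable {u v : ℝ × ℝ → ℝ} {l b : ℝ}

lemma sliceEnergy_nonneg (hb : 0 ≤ b) (x : ℝ) : 0 ≤ sliceEnergy u v b x :=
  intervalIntegral.integral_nonneg (by linarith) fun _ _ => gradPairing_nonneg u v _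

lemma continuous_sliceEnergy (hu : ContDiffOn ℝ 1 u (strip l)) (hv : ContDiffOn ℝ 1 v (strip l))
    (hb : 0 ≤ b) (hbl : b < l) : Continuous (sliceEnergy u v b) :=
  continuous_intervalIntegral_of_continuousOn
    ((continuousOn_gradPairing (isOpen_strip l) hu hv).mono (univ_prod_uIcc_subset_strip hb hbl))

lemma energy_eq (hu : ContDiffOn ℝ 2 u (strip l)) (hv : ContDiffOn ℝ 2 v (strip l))
    (hcmc : ∀ p ∈ strip l, cmcOp u p = cmcOp v p) (hb : 0 ≤ b) (hbl : b < l) (t : ℝ) :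
    energy u v b t =
      (((∫ x in -t..t, fluxY u v (x, b)) - ∫ x in -t..t, fluxY u v (x, -b)) +
        ∫ y in -b..b, fluxX u v (t, y)) - ∫ y in -b..b, fluxX u v (-t, y) := by
  have hR := uIcc_prod_uIcc_subset_strip hb hbl t
  rw [← integral_integral_pdx_add_pdy (isOpen_strip l) (contDiffOn_fluxX (isOpen_strip l) hu hv)
    (contDiffOn_fluxY (isOpen_strip l) hu hv) hR]
  refine intervalIntegral.integral_congr fun x hx => intervalIntegral.integral_congr fun y hy => ?_
  have hp := hR (mk_mem_prod hx hy)
  exact (pdx_fluxX_add_pdy_fluxY (isOpen_strip l) hu hv hp (hcmc _ hp)).symm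

lemma energy_le (hu : ContDiffOn ℝ 2 u (strip l)) (hv : ContDiffOn ℝ 2 v (strip l))
    (hcmc : ∀ p ∈ strip l, cmcOp u p = cmcOp v p) {M : ℝ}
    (hM : ∀ p ∈ strip l, |v p - u p| ≤ M) (hb : 0 ≤ b) (hbl : b < l) {t A : ℝ} (ht : 0 ≤ t)
    (htA : t ≤ A) :
    energy u v b t ≤
      2 * (∫ x in -A..A, (|v (x, b) - u (x, b)| + |v (x, -b) - u (x, -b)|)) +
        M * sideFlux u v b t := by
  have hS := isOpen_strip l
  have hbS : b ∈ Ioo (-l) l := ⟨by linarith, hbl⟩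
  have hbS' : -b ∈ Ioo (-l) l := ⟨by linarith, by linarith⟩
  have hw : ContinuousOn (fun q => v q - u q) (strip l) := hv.continuousOn.sub hu.continuousOn
  have hX : ContinuousOn (fun q => tx v q - tx u q) (strip l) :=
    ((contDiffOn_tx hS hv one_add_one_eq_two.le).sub
      (contDiffOn_tx hS hu one_add_one_eq_two.le)).continuousOn
  have hfX := (contDiffOn_fluxX hS hu hv).continuousOn
  have hfY := (contDiffOn_fluxY hS hu hv).continuousOn
  have hQ : Continuous fun x => 2 * (|v (x, b) - u (x, b)| + |v (x, -b) - u (x, -b)|) :=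
    continuous_const.mul ((continuous_horizontal_slice hw hbS).abs.add
      (continuous_horizontal_slice hw hbS').abs)
  have hhor : (∫ x in -t..t, fluxY u v (x, b)) - ∫ x in -t..t, fluxY u v (x, -b) ≤
      2 * ∫ x in -A..A, (|v (x, b) - u (x, b)| + |v (x, -b) - u (x, -b)|) := by
    calc _ ≤ ∫ x in -t..t, 2 * (|v (x, b) - u (x, b)| + |v (x, -b) - u (x, -b)|) :=
          intervalIntegral_sub_le_of_abs_add_abs_le (by linarith)
            ((continuous_horizontal_slice hfY hbS).intervalIntegrable _ _)
            ((continuous_horizontal_slice hfY hbS').intervalIntegrable _ _)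
            (hQ.intervalIntegrable _ _) fun x _ => by
              linarith [abs_fluxY_le u v (x, b), abs_fluxY_le u v (x, -b)]
      _ ≤ ∫ x in -A..A, 2 * (|v (x, b) - u (x, b)| + |v (x, -b) - u (x, -b)|) :=
          intervalIntegral.integral_mono_interval (by linarith) (by linarith) htA
            (ae_of_all _ fun x => by positivity) (hQ.intervalIntegrable _ _)
      _ = _ := intervalIntegral.integral_const_mul _ _
  have hver : (∫ y in -b..b, fluxX u v (t, y)) - ∫ y in -b..b, fluxX u v (-t, y) ≤
      M * sideFlux u v b t := by
    rw [sideFlux, ← intervalIntegral.integral_const_mul]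
    refine intervalIntegral_sub_le_of_abs_add_abs_le (by linarith)
      (continuousOn_vertical_slice hfX hb hbl t).intervalIntegrable
      (continuousOn_vertical_slice hfX hb hbl (-t)).intervalIntegrable
      (((continuousOn_vertical_slice hX hb hbl t).abs.add
        (continuousOn_vertical_slice hX hb hbl (-t)).abs).const_smul M).intervalIntegrable
      fun y hy => ?_
    have hy' : y ∈ [[-b, b]] := Icc_subset_uIcc hy
    have h1 := abs_fluxX_le u v (t, y)
      (hM _ (univ_prod_uIcc_subset_strip hb hbl ⟨mem_univ t, hy'⟩))
    have h2 := abs_fluxX_le u v (-t, y)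
      (hM _ (univ_prod_uIcc_subset_strip hb hbl ⟨mem_univ (-t), hy'⟩))
    linarith
  rw [energy_eq hu hv hcmc hb hbl t]
  linarith

lemma sideFlux_le (hu : ContDiffOn ℝ 1 u (strip l)) (hv : ContDiffOn ℝ 1 v (strip l))
    (hb : 0 ≤ b) (hbl : b < l) (t : ℝ) : sideFlux u v b t ≤ 8 * b := by
  have hS := isOpen_strip l
  have hX : ContinuousOn (fun q => tx v q - tx u q) (strip l) :=
    ((contDiffOn_tx hS hv (zero_add 1).le).sub (contDiffOn_tx hS hu (zero_add 1).le)).continuousOn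
  calc sideFlux u v b t ≤ ∫ _ in -b..b, (4 : ℝ) :=
        intervalIntegral.integral_mono_on (by linarith)
          ((continuousOn_vertical_slice hX hb hbl t).abs.add
            (continuousOn_vertical_slice hX hb hbl (-t)).abs).intervalIntegrable
          intervalIntegrable_const fun y _ => by
            linarith [abs_tx_sub_le_two u v (t, y), abs_tx_sub_le_two u v (-t, y)]
    _ = 8 * b := by
        rw [intervalIntegral.integral_const, smul_eq_mul]
        ring

lemma sq_sideFlux_le (hu : ContDiffOn ℝ 1 u (strip l)) (hv : ContDiffOn ℝ 1 v (strip l))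
    (hb : 0 ≤ b) (hbl : b < l) (t : ℝ) :
    sideFlux u v b t ^ 2 ≤ 4 * b * (sliceEnergy u v b t + sliceEnergy u v b (-t)) := by
  have hS := isOpen_strip l
  have hX : ContinuousOn (fun q => tx v q - tx u q) (strip l) :=
    ((contDiffOn_tx hS hv (zero_add 1).le).sub (contDiffOn_tx hS hu (zero_add 1).le)).continuousOn
  have hg := (continuousOn_vertical_slice hX hb hbl t).abs.add
    (continuousOn_vertical_slice hX hb hbl (-t)).abs
  have hd := continuousOn_gradPairing hS hu hv
  have hdt := (continuousOn_vertical_slice hd hb hbl t).intervalIntegrable (μ := volume)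
  have hdt' := (continuousOn_vertical_slice hd hb hbl (-t)).intervalIntegrable (μ := volume)
  calc sideFlux u v b t ^ 2
      ≤ (b - -b) * ∫ y in -b..b,
          (|tx v (t, y) - tx u (t, y)| + |tx v (-t, y) - tx u (-t, y)|) ^ 2 :=
        sq_intervalIntegral_le (by linarith) hg
    _ ≤ (b - -b) * ∫ y in -b..b, 2 * (gradPairing u v (t, y) + gradPairing u v (-t, y)) := by
        refine mul_le_mul_of_nonneg_left (intervalIntegral.integral_mono_on (by linarith)
          (hg.pow 2).intervalIntegrable ((hdt.add hdt').const_mul 2) fun y _ => ?_) (by linarith)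
        nlinarith [sq_abs (tx v (t, y) - tx u (t, y)), sq_abs (tx v (-t, y) - tx u (-t, y)),
          sq_nonneg (|tx v (t, y) - tx u (t, y)| - |tx v (-t, y) - tx u (-t, y)|),
          sq_tx_sub_le_gradPairing u v (t, y), sq_tx_sub_le_gradPairing u v (-t, y)]
    _ = 4 * b * (sliceEnergy u v b t + sliceEnergy u v b (-t)) := by
        rw [intervalIntegral.integral_const_mul, intervalIntegral.integral_add hdt hdt',
          sliceEnergy, sliceEnergy]
        ring

lemma mul_sub_le_energy_sub_energy (hu : ContDiffOn ℝ 1 u (strip l))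
    (hv : ContDiffOn ℝ 1 v (strip l)) (hb : 0 ≤ b) (hbl : b < l) {a A κ : ℝ} (haA : a ≤ A)
    (hκ : ∀ t ∈ Icc a A, κ ≤ sliceEnergy u v b t + sliceEnergy u v b (-t)) :
    κ * (A - a) ≤ energy u v b A - energy u v b a := by
  have hφ := continuous_sliceEnergy hu hv hb hbl
  rw [energy, energy, integral_neg_sub_integral_neg hφ]
  have := intervalIntegral.integral_mono_on (μ := volume) haA intervalIntegrable_const
    ((hφ.add (hφ.comp continuous_neg)).intervalIntegrable _ _) hκ
  rwa [intervalIntegral.integral_const, smul_eq_mul, mul_comm] at this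

lemma exists_energy_pos (hu : ContDiffOn ℝ 1 u (strip l)) (hv : ContDiffOn ℝ 1 v (strip l))
    {p : ℝ × ℝ} (hp : p ∈ strip l) (hpos : 0 < gradPairing u v p) :
    ∃ b a, 0 ≤ b ∧ b < l ∧ 0 ≤ a ∧ 0 < energy u v b a := by
  obtain ⟨x₀, y₀⟩ := p
  have hy₀ : |y₀| < l := abs_lt.2 hp.2
  have hb : 0 ≤ (|y₀| + l) / 2 := by linarith [abs_nonneg y₀]
  have hbl : (|y₀| + l) / 2 < l := by linarith
  have hslice : 0 < sliceEnergy u v ((|y₀| + l) / 2) x₀ := by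
    refine intervalIntegral_pos_of_continuousOn ?_ (fun y _ => gradPairing_nonneg u v _)
      ⟨by linarith [neg_abs_le y₀], by linarith [le_abs_self y₀]⟩ hpos
    simpa only [uIcc_of_le (by linarith : -((|y₀| + l) / 2) ≤ (|y₀| + l) / 2)] using
      continuousOn_vertical_slice (continuousOn_gradPairing (isOpen_strip l) hu hv) hb hbl x₀
  exact ⟨_, |x₀| + 1, hb, hbl, by positivity, intervalIntegral_pos_of_continuousOn
    (continuous_sliceEnergy hu hv hb hbl).continuousOn (fun x _ => sliceEnergy_nonneg hb x)
    ⟨by linarith [neg_abs_le x₀], by linarith [le_abs_self x₀]⟩ hslice⟩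

lemma energy_mono (hu : ContDiffOn ℝ 1 u (strip l)) (hv : ContDiffOn ℝ 1 v (strip l))
    {a t b' : ℝ} (hb : 0 ≤ b) (hbb' : b ≤ b') (hb'l : b' < l) (ha : 0 ≤ a) (hat : a ≤ t) :
    energy u v b a ≤ energy u v b' t := by
  have hφ' := continuous_sliceEnergy hu hv (hb.trans hbb') hb'l
  calc energy u v b a ≤ energy u v b' a :=
        intervalIntegral.integral_mono_on (by linarith)
          ((continuous_sliceEnergy hu hv hb (hbb'.trans_lt hb'l)).intervalIntegrable _ _)
          (hφ'.intervalIntegrable _ _) fun x _ =>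
            intervalIntegral.integral_mono_interval (by linarith) (by linarith) hbb'
              (ae_of_all _ fun y => gradPairing_nonneg u v _)
              (continuousOn_vertical_slice (continuousOn_gradPairing (isOpen_strip l) hu hv)
                (hb.trans hbb') hb'l x).intervalIntegrable
    _ ≤ energy u v b' t :=
        intervalIntegral.integral_mono_interval (by linarith) (by linarith) hat
          (ae_of_all _ fun x => sliceEnergy_nonneg (hb.trans hbb') x) (hφ'.intervalIntegrable _ _)

theorem gradPairing_eq_zero (hu : ContDiffOn ℝ 2 u (strip l)) (hv : ContDiffOn ℝ 2 v (strip l))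
    (hcmc : ∀ p ∈ strip l, cmcOp u p = cmcOp v p)
    (hw : ContinuousOn (fun q => v q - u q) (closure (strip l)))
    (hbdry : EqOn u v (frontier (strip l))) {M : ℝ} (hM : ∀ p ∈ strip l, |v p - u p| ≤ M)
    {p : ℝ × ℝ} (hp : p ∈ strip l) : gradPairing u v p = 0 := by
  by_contra hne
  have hl : 0 < l := by linarith [hp.2.1, hp.2.2]
  have hu1 := hu.of_le one_le_two
  have hv1 := hv.of_le one_le_two
  obtain ⟨b₁, a, hb₁, hb₁l, ha, hδ⟩ :=
    exists_energy_pos hu1 hv1 hp ((gradPairing_nonneg u v p).lt_of_ne' hne)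
  set δ := energy u v b₁ a
  obtain ⟨M, hM0, hM⟩ : ∃ M > 0, ∀ p ∈ strip l, |v p - u p| ≤ M :=
    ⟨max M 1, by positivity, fun p hp => (hM p hp).trans (le_max_left _ _)⟩
  -- The growth rate of the energy forced by a side flux of at least `δ / (2 M)`.
  set κ := (δ / (2 * M)) ^ 2 / (4 * l)
  have hκ0 : 0 < κ := by positivity
  set A := a + (δ + 8 * M * l) / κ
  have hκA : κ * (A - a) = δ + 8 * M * l := by
    simp only [A]
    field_simp
    ring
  have haA : a ≤ A := by nlinarith
  obtain ⟨b, ⟨hb₁b, hbl⟩, hQ⟩ := exists_integral_abs_lt hl hw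
    (fun q hq => by simp [hbdry hq]) hM A (by positivity : 0 < δ / 4) hb₁l
  have hb : 0 ≤ b := by linarith
  have hlow : ∀ t, a ≤ t → δ ≤ energy u v b t := fun t ht =>
    energy_mono hu1 hv1 hb₁ hb₁b.le hbl ha ht
  have hup : ∀ t ∈ Icc a A, energy u v b t ≤ δ / 2 + M * sideFlux u v b t := fun t ht => by
    linarith [energy_le hu hv hcmc hM hb hbl (ha.trans ht.1) ht.2]
  have hκ : ∀ t ∈ Icc a A, κ ≤ sliceEnergy u v b t + sliceEnergy u v b (-t) := fun t ht => by
    have hflux : δ / (2 * M) ≤ sideFlux u v b t := by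
      rw [div_le_iff₀ (by positivity)]
      linarith [hup t ht, hlow t ht.1]
    have h0 : 0 ≤ sliceEnergy u v b t + sliceEnergy u v b (-t) :=
      add_nonneg (sliceEnergy_nonneg hb t) (sliceEnergy_nonneg hb (-t))
    show (δ / (2 * M)) ^ 2 / (4 * l) ≤ _
    rw [div_le_iff₀ (by positivity)]
    nlinarith [pow_le_pow_left₀ (by positivity) hflux 2, sq_sideFlux_le hu1 hv1 hb hbl t]
  nlinarith [mul_sub_le_energy_sub_energy hu1 hv1 hb hbl haA hκ, hup A ⟨haA, le_rfl⟩,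
    hlow a le_rfl, mul_le_mul_of_nonneg_left (sideFlux_le hu1 hv1 hb hbl A) hM0.le]

lemma eqOn_strip_of_pdx_eq_of_pdy_eq (hl : 0 < l) (hu : ContDiffOn ℝ 1 u (strip l))
    (hv : ContDiffOn ℝ 1 v (strip l)) (hw : ContinuousOn (fun q => v q - u q) (closure (strip l)))
    (hbdry : EqOn u v (frontier (strip l)))
    (hgrad : ∀ q ∈ strip l, pdx u q = pdx v q ∧ pdy u q = pdy v q) : EqOn u v (strip l) := by
  have hd : ∀ {f : ℝ × ℝ → ℝ}, ContDiffOn ℝ 1 f (strip l) → ∀ q ∈ strip l,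
      DifferentiableAt ℝ f q := fun hf q hq =>
    (hf.contDiffAt ((isOpen_strip l).mem_nhds hq)).differentiableAt one_ne_zero
  have hzero := (isOpen_strip l).eqOn_zero_of_fderiv_eq_zero (isPreconnected_strip l)
    ⟨(0, l), by simp [frontier_strip hl]⟩
    ((hv.differentiableOn one_ne_zero).fun_sub (hu.differentiableOn one_ne_zero))
    (fun q hq => fderiv_eq_zero_of_pdx_of_pdy
      (by rw [pdx_sub (hd hv q hq) (hd hu q hq), (hgrad q hq).1, sub_self])
      (by rw [pdy_sub (hd hv q hq) (hd hu q hq), (hgrad q hq).2, sub_self]))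
    hw fun q hq => by simp [hbdry hq]
  exact fun q hq => (sub_eq_zero.1 (hzero hq)).symm

end BoundedDifference

theorem cmc_strip_bounded_difference_uniqueness_general (H l : ℝ)
    (u v : ℝ × ℝ → ℝ)
    (hu : ContDiffOn ℝ 2 u ((Set.univ : Set ℝ) ×ˢ Set.Ioo (-l) l))
    (hv : ContDiffOn ℝ 2 v ((Set.univ : Set ℝ) ×ˢ Set.Ioo (-l) l))
    (hucont : ContinuousOn u (closure ((Set.univ : Set ℝ) ×ˢ Set.Ioo (-l) l)))
    (hvcont : ContinuousOn v (closure ((Set.univ : Set ℝ) ×ˢ Set.Ioo (-l) l)))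
    (hucmc : ∀ p ∈ (Set.univ : Set ℝ) ×ˢ Set.Ioo (-l) l, cmcOp u p = 2 * H)
    (hvcmc : ∀ p ∈ (Set.univ : Set ℝ) ×ˢ Set.Ioo (-l) l, cmcOp v p = 2 * H)
    (hbdry : Set.EqOn u v (frontier ((Set.univ : Set ℝ) ×ˢ Set.Ioo (-l) l)))
    (hbnd : ∃ M : ℝ, ∀ p ∈ (Set.univ : Set ℝ) ×ˢ Set.Ioo (-l) l, |v p - u p| ≤ M) :
    Set.EqOn u v ((Set.univ : Set ℝ) ×ˢ Set.Ioo (-l) l) := by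
  intro p hp
  have hl : 0 < l := by linarith [hp.2.1, hp.2.2]
  obtain ⟨M, hM⟩ := hbnd
  have hcmc : ∀ q ∈ strip l, cmcOp u q = cmcOp v q := fun q hq =>
    (hucmc q hq).trans (hvcmc q hq).symm
  have hw := hvcont.sub hucont
  exact eqOn_strip_of_pdx_eq_of_pdy_eq hl (hu.of_le one_le_two) (hv.of_le one_le_two) hw hbdry
    (fun q hq => pdx_eq_and_pdy_eq_of_gradPairing_eq_zero u v q
      (gradPairing_eq_zero hu hv hcmc hw hbdry hM hq)) hp

/-- Collin–Krust type uniqueness: two CMC solutions on a strip with the same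
boundary values and bounded difference coincide. -/
theorem cmc_strip_bounded_difference_uniqueness (H l : ℝ) (hH : 0 < H)
    (hl : 0 < l) (hl' : 2 * l ≤ 1 / H)
    (u v : ℝ × ℝ → ℝ)
    (hu : ContDiffOn ℝ 2 u ((Set.univ : Set ℝ) ×ˢ Set.Ioo (-l) l))
    (hv : ContDiffOn ℝ 2 v ((Set.univ : Set ℝ) ×ˢ Set.Ioo (-l) l))
    (hucont : ContinuousOn u (closure ((Set.univ : Set ℝ) ×ˢ Set.Ioo (-l) l)))
    (hvcont : ContinuousOn v (closure ((Set.univ : Set ℝ) ×ˢ Set.Ioo (-l) l)))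
    (hucmc : ∀ p ∈ (Set.univ : Set ℝ) ×ˢ Set.Ioo (-l) l, cmcOp u p = 2 * H)
    (hvcmc : ∀ p ∈ (Set.univ : Set ℝ) ×ˢ Set.Ioo (-l) l, cmcOp v p = 2 * H)
    (hbdry : Set.EqOn u v (frontier ((Set.univ : Set ℝ) ×ˢ Set.Ioo (-l) l)))
    (hbnd : ∃ M : ℝ, ∀ p ∈ (Set.univ : Set ℝ) ×ˢ Set.Ioo (-l) l, |v p - u p| ≤ M) :
    Set.EqOn u v ((Set.univ : Set ℝ) ×ˢ Set.Ioo (-l) l) :=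
  cmc_strip_bounded_difference_uniqueness_general H l u v hu hv hucont hvcont hucmc hvcmc hbdry hbnd
end
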